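/- Let g(t) = e^{-π t²/(2σ²)} be a Gaussian window and f(t) = e^{2πiω₁t} + e^{2πiω₂t} with ω₁ ≠ ω₂. Then the time-invariant STFT W(f,g)(x,ω) = ∫ f(t) conj(g(t-x)) e^{-2πiω(t-x)} dt equals √(2)σ ( e^{2πixω₁} e^{-2πσ²(ω-ω₁)²} + e^{2πixω₂} e^{-2πσ²(ω-ω₂)²} ) up to the common normalization constant, and its zero set is exactly { (x_k, ω_m) : k ∈ ℤ } where ω_m = (ω₁+ω₂)/2 and x_k = (1+2k)/(2(ω₁-ω₂)). -/

import Mathlib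

/-!
After the substitution `t = x + u`, each sinusoid contributes the phase `e^{2πixν}` times the
complex Gaussian integral `∫ e^{-a u² + c u} du = √(π/a) e^{c²/(4a)}` with `a = π/(2σ²)` and
`c = 2πi(ν - ω)`, which is a Gaussian ridge along `ω = ν`. The phases have modulus one and the
ridges are positive, so the sum vanishes exactly when the two ridges have equal height (`ω` is
the midpoint of `ω₁, ω₂`) and the phases are opposite (`e^{2πix(ω₁-ω₂)} = -1`).
-/

open MeasureTheory Complex Real

/-- The time-invariant STFT
`W(f,g)(x,ω) = ∫ f(t) conj(g(t-x)) e^{-2πiω(t-x)} dt`. -/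
noncomputable def stftTI (f g : ℝ → ℂ) (x ω : ℝ) : ℂ :=
  ∫ t : ℝ, f t * (starRingEnd ℂ) (g (t - x)) *
    Complex.exp (-2 * Real.pi * Complex.I * ω * (t - x))

noncomputable def sinusoid (ν t : ℝ) : ℂ := cexp (2 * π * I * ν * t)

noncomputable def gaussianWindow (σ t : ℝ) : ℂ := (Real.exp (-(π * t ^ 2) / (2 * σ ^ 2)) : ℂ)

theorem stftTI_add {f₁ f₂ g : ℝ → ℂ} {x ω : ℝ}
    (h₁ : Integrable fun t ↦ f₁ t * starRingEnd ℂ (g (t - x)) * cexp (-2 * π * I * ω * (t - x)))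
    (h₂ : Integrable fun t ↦ f₂ t * starRingEnd ℂ (g (t - x)) * cexp (-2 * π * I * ω * (t - x))) :
    stftTI (f₁ + f₂) g x ω = stftTI f₁ g x ω + stftTI f₂ g x ω := by
  simp only [stftTI, Pi.add_apply, add_mul]
  exact integral_add h₁ h₂

theorem integral_cexp_neg_mul_sq_add_mul {a : ℝ} (ha : 0 < a) (c : ℂ) :
    ∫ u : ℝ, cexp (-a * u ^ 2 + c * u) = (√(π / a) : ℂ) * cexp (c ^ 2 / (4 * a)) := by
  have hb : (-(a : ℂ)).re < 0 := by simpa using ha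
  have hsqrt : ((π : ℂ) / -(-(a : ℂ))) ^ (1 / 2 : ℂ) = (√(π / a) : ℂ) := by
    rw [neg_neg, ← ofReal_div, Real.sqrt_eq_rpow, ofReal_cpow (by positivity)]
    norm_num
  have h := integral_cexp_quadratic hb c 0
  simp only [add_zero, hsqrt] at h
  rw [h]
  congr 2
  ring

theorem sinusoid_mul_conj_gaussianWindow (σ ν x ω t : ℝ) :
    sinusoid ν t * starRingEnd ℂ (gaussianWindow σ (t - x)) * cexp (-2 * π * I * ω * (t - x)) =
      cexp (2 * π * I * x * ν) *
        cexp (-(π / (2 * σ ^ 2) : ℝ) * (t - x : ℝ) ^ 2 + 2 * π * I * (ν - ω) * (t - x : ℝ)) := by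
  simp only [sinusoid, gaussianWindow, conj_ofReal]
  rw [ofReal_exp, ← Complex.exp_add, ← Complex.exp_add, ← Complex.exp_add]
  congr 1
  push_cast
  ring

theorem integrable_sinusoid_mul_conj_gaussianWindow {σ : ℝ} (hσ : σ ≠ 0) (ν x ω : ℝ) :
    Integrable fun t ↦
      sinusoid ν t * starRingEnd ℂ (gaussianWindow σ (t - x)) *
        cexp (-2 * π * I * ω * (t - x)) := by
  have hb : (-((π / (2 * σ ^ 2) : ℝ) : ℂ)).re < 0 := by
    have : 0 < π / (2 * σ ^ 2) := by positivity
    rw [neg_re, ofReal_re]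
    linarith
  simp_rw [sinusoid_mul_conj_gaussianWindow]
  simpa using ((integrable_cexp_quadratic' hb (2 * π * I * (ν - ω)) 0).const_mul
    (cexp (2 * π * I * x * ν))).comp_sub_right x

theorem stftTI_sinusoid_gaussianWindow {σ : ℝ} (hσ : 0 < σ) (ν x ω : ℝ) :
    stftTI (sinusoid ν) (gaussianWindow σ) x ω =
      (√2 * σ : ℝ) *
        (cexp (2 * π * I * x * ν) * (Real.exp (-2 * π * σ ^ 2 * (ω - ν) ^ 2) : ℂ)) := by
  have ha : 0 < π / (2 * σ ^ 2) := by positivity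
  simp_rw [stftTI, sinusoid_mul_conj_gaussianWindow]
  rw [integral_sub_right_eq_self (fun u : ℝ ↦ cexp (2 * π * I * x * ν) *
      cexp (-(π / (2 * σ ^ 2) : ℝ) * u ^ 2 + 2 * π * I * (ν - ω) * u)) x,
    integral_const_mul, integral_cexp_neg_mul_sq_add_mul ha]
  have hsqrt : √(π / (π / (2 * σ ^ 2))) = √2 * σ := by
    rw [div_div_cancel₀ pi_ne_zero, Real.sqrt_mul zero_le_two, Real.sqrt_sq hσ.le]
  have hexp : (2 * π * I * (ν - ω)) ^ 2 / (4 * (π / (2 * σ ^ 2) : ℝ)) =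
      ((-2 * π * σ ^ 2 * (ω - ν) ^ 2 : ℝ) : ℂ) := by
    push_cast
    field_simp
    ring_nf
    rw [I_sq]
    ring
  rw [hsqrt, hexp, ofReal_exp]
  ring

theorem mul_ofReal_add_mul_ofReal_eq_zero_iff {u v : ℂ} (hu : ‖u‖ = 1) (hv : ‖v‖ = 1) {a b : ℝ}
    (ha : 0 < a) (hb : 0 ≤ b) : u * a + v * b = 0 ↔ a = b ∧ u + v = 0 := by
  constructor
  · intro h
    have hab : a = b := by
      have h' : ‖u * a‖ = ‖v * b‖ := by rw [eq_neg_of_add_eq_zero_left h, norm_neg]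
      rwa [norm_mul, norm_mul, hu, hv, norm_real, norm_real, Real.norm_of_nonneg ha.le,
        Real.norm_of_nonneg hb, one_mul, one_mul] at h'
    subst hab
    refine ⟨rfl, (mul_eq_zero.mp ?_).resolve_right (ofReal_ne_zero.mpr ha.ne')⟩
    rw [add_mul, h]
  · rintro ⟨rfl, h⟩
    rw [← add_mul, h, zero_mul]

theorem mul_sq_sub_eq_mul_sq_sub_iff {c ω₁ ω₂ : ℝ} (hc : c ≠ 0) (hne : ω₁ ≠ ω₂) (ω : ℝ) :
    c * (ω - ω₁) ^ 2 = c * (ω - ω₂) ^ 2 ↔ ω = (ω₁ + ω₂) / 2 := by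
  have hfactor : c * (ω - ω₁) ^ 2 - c * (ω - ω₂) ^ 2 = c * (ω₂ - ω₁) * (2 * ω - (ω₁ + ω₂)) := by
    ring
  rw [← sub_eq_zero, hfactor, mul_eq_zero, or_iff_right (mul_ne_zero hc (sub_ne_zero.mpr hne.symm)),
    sub_eq_zero]
  constructor <;> intro h <;> linarith

theorem Complex.exp_add_exp_eq_zero_iff {z w : ℂ} :
    cexp z + cexp w = 0 ↔ ∃ n : ℤ, z = w + π * I + n * (2 * π * I) := by
  rw [add_eq_zero_iff_eq_neg, ← exp_eq_exp_iff_exists_int, exp_add, exp_pi_mul_I, mul_neg_one]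

theorem cexp_two_pi_I_mul_add_cexp_eq_zero_iff {ω₁ ω₂ : ℝ} (hne : ω₁ ≠ ω₂) (x : ℝ) :
    cexp (2 * π * I * x * ω₁) + cexp (2 * π * I * x * ω₂) = 0 ↔
      ∃ k : ℤ, x = (1 + 2 * (k : ℝ)) / (2 * (ω₁ - ω₂)) := by
  have hπI : (π : ℂ) * I ≠ 0 := mul_ne_zero (ofReal_ne_zero.mpr pi_ne_zero) I_ne_zero
  rw [Complex.exp_add_exp_eq_zero_iff]
  refine exists_congr fun k ↦ ?_
  rw [eq_div_iff (mul_ne_zero two_ne_zero (sub_ne_zero.mpr hne))]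
  conv_rhs => rw [← ofReal_inj, ← mul_left_inj' hπI]
  push_cast
  constructor <;> intro h <;> linear_combination h

theorem norm_cexp_two_pi_I_mul (x ν : ℝ) : ‖cexp (2 * π * I * x * ν)‖ = 1 := by
  rw [norm_exp]
  simp

/-- For the two-sinusoid signal `f(t) = e^{2πiω₁t} + e^{2πiω₂t}` (with `ω₁ ≠ ω₂`)
and the Gaussian window `g(t) = e^{-πt²/(2σ²)}`, the time-invariant STFT equals
`√2 σ (e^{2πixω₁} e^{-2πσ²(ω-ω₁)²} + e^{2πixω₂} e^{-2πσ²(ω-ω₂)²})`, and its zero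
set is exactly `{(x_k, ω_m) : k ∈ ℤ}`, with `ω_m = (ω₁+ω₂)/2` and
`x_k = (1+2k)/(2(ω₁-ω₂))`. -/
theorem stft_two_sinusoids_gaussian (σ ω₁ ω₂ : ℝ) (hσ : 0 < σ) (hne : ω₁ ≠ ω₂)
    (f g : ℝ → ℂ)
    (hf : f = fun t : ℝ => Complex.exp (2 * Real.pi * Complex.I * ω₁ * t) +
      Complex.exp (2 * Real.pi * Complex.I * ω₂ * t))
    (hg : g = fun t : ℝ => (Real.exp (-(Real.pi * t ^ 2) / (2 * σ ^ 2)) : ℂ)) :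
    (∀ x ω : ℝ, stftTI f g x ω =
      (Real.sqrt 2 * σ : ℝ) *
        (Complex.exp (2 * Real.pi * Complex.I * x * ω₁) *
            (Real.exp (-2 * Real.pi * σ ^ 2 * (ω - ω₁) ^ 2) : ℂ) +
         Complex.exp (2 * Real.pi * Complex.I * x * ω₂) *
            (Real.exp (-2 * Real.pi * σ ^ 2 * (ω - ω₂) ^ 2) : ℂ))) ∧
    (∀ x ω : ℝ, stftTI f g x ω = 0 ↔
      ω = (ω₁ + ω₂) / 2 ∧ ∃ k : ℤ, x = (1 + 2 * (k : ℝ)) / (2 * (ω₁ - ω₂))) := by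
  obtain rfl : f = sinusoid ω₁ + sinusoid ω₂ := hf
  obtain rfl : g = gaussianWindow σ := hg
  have hstft (x ω : ℝ) : stftTI (sinusoid ω₁ + sinusoid ω₂) (gaussianWindow σ) x ω =
      (√2 * σ : ℝ) * (cexp (2 * π * I * x * ω₁) * (Real.exp (-2 * π * σ ^ 2 * (ω - ω₁) ^ 2) : ℂ) +
        cexp (2 * π * I * x * ω₂) * (Real.exp (-2 * π * σ ^ 2 * (ω - ω₂) ^ 2) : ℂ)) := by
    rw [stftTI_add (integrable_sinusoid_mul_conj_gaussianWindow hσ.ne' ω₁ x ω)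
      (integrable_sinusoid_mul_conj_gaussianWindow hσ.ne' ω₂ x ω),
      stftTI_sinusoid_gaussianWindow hσ, stftTI_sinusoid_gaussianWindow hσ, mul_add]
  refine ⟨hstft, fun x ω ↦ ?_⟩
  have hscale : ((√2 * σ : ℝ) : ℂ) ≠ 0 := ofReal_ne_zero.mpr (by positivity)
  have hwidth : -2 * π * σ ^ 2 ≠ 0 :=
    mul_ne_zero (mul_ne_zero (by norm_num) pi_ne_zero) (pow_ne_zero 2 hσ.ne')
  rw [hstft, mul_eq_zero, or_iff_right hscale,
    mul_ofReal_add_mul_ofReal_eq_zero_iff (norm_cexp_two_pi_I_mul x ω₁)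
      (norm_cexp_two_pi_I_mul x ω₂) (Real.exp_pos _) (Real.exp_pos _).le,
    Real.exp_eq_exp, mul_sq_sub_eq_mul_sq_sub_iff hwidth hne,
    cexp_two_pi_I_mul_add_cexp_eq_zero_iff hne]
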